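/- arXiv:2010.13195 — 4 statements merged into one kernel-verified Lean document; each statement's English description precedes it below -/
import Mathlib

section
/- Let C be a convex set in the plane not containing the intersection point c of two crossing line segments [f₀,f₂] and [f₁,f₃], where the four open regions R¹, R², R³, R⁴ are the connected components of the complement (within an open disk containing everything) of the union of the two segments. Then C cannot have a point in all four regions R¹, R², R³, R⁴. -/
/-!
Let `L₁, L₂` be the affine functions vanishing on the two chord lines. Along `[p₁, p₂]` the
function `L₂` changes sign while `L₁ > 0`, so `C` contains a point `m₁` with `L₂ m₁ = 0` and
`L₁ m₁ > 0`; likewise `[p₄, p₃]` gives `m₂ ∈ C` with `L₂ m₂ = 0` and `L₁ m₂ < 0`. On `[m₁, m₂]`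
the function `L₂` stays zero while `L₁` changes sign, so `C` contains a common zero of `L₁` and
`L₂`. The chords are not parallel, so that common zero is their crossing point `c`.
-/

/-- The cross product (signed area form) of two vectors in the plane. -/
def crossP (u v : ℝ × ℝ) : ℝ := u.1 * v.2 - u.2 * v.1

/-- The open unit disk in the plane. -/
def unitDisk : Set (ℝ × ℝ) := {p | p.1 ^ 2 + p.2 ^ 2 < 1}

section

variable {𝕜 E : Type*} [Field 𝕜] [LinearOrder 𝕜] [IsStrictOrderedRing 𝕜]
  [AddCommGroup E] [Module 𝕜 E] {C : Set E}

theorem Convex.exists_mem_eq_zero_of_pos_of_neg (hC : Convex 𝕜 C) (L : E →ᵃ[𝕜] 𝕜) {p q : E}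
    (hp : p ∈ C) (hq : q ∈ C) (hLp : 0 < L p) (hLq : L q < 0) : ∃ m ∈ C, L m = 0 := by
  have hpq : 0 < L p - L q := by linarith
  refine ⟨AffineMap.lineMap p q (L p / (L p - L q)), hC.lineMap_mem hp hq ⟨?_, ?_⟩, ?_⟩
  · positivity
  · rw [div_le_one hpq]; linarith
  · rw [L.apply_lineMap, AffineMap.lineMap_apply_ring']
    field_simp
    ring

theorem Convex.exists_mem_eq_zero_eq_zero_of_meets_quadrants (hC : Convex 𝕜 C)
    (L₁ L₂ : E →ᵃ[𝕜] 𝕜)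
    (h₁ : ∃ p ∈ C, 0 < L₁ p ∧ 0 < L₂ p) (h₂ : ∃ p ∈ C, 0 < L₁ p ∧ L₂ p < 0)
    (h₃ : ∃ p ∈ C, L₁ p < 0 ∧ L₂ p < 0) (h₄ : ∃ p ∈ C, L₁ p < 0 ∧ 0 < L₂ p) :
    ∃ m ∈ C, L₁ m = 0 ∧ L₂ m = 0 := by
  obtain ⟨p₁, hp₁C, hp₁, hq₁⟩ := h₁
  obtain ⟨p₂, hp₂C, hp₂, hq₂⟩ := h₂
  obtain ⟨p₃, hp₃C, hp₃, hq₃⟩ := h₃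
  obtain ⟨p₄, hp₄C, hp₄, hq₄⟩ := h₄
  obtain ⟨m₁, ⟨hm₁C, hm₁⟩, hm₁'⟩ :=
    (hC.inter ((convex_Ioi 0).affine_preimage L₁)).exists_mem_eq_zero_of_pos_of_neg
      L₂ ⟨hp₁C, hp₁⟩ ⟨hp₂C, hp₂⟩ hq₁ hq₂
  obtain ⟨m₂, ⟨hm₂C, hm₂⟩, hm₂'⟩ :=
    (hC.inter ((convex_Iio 0).affine_preimage L₁)).exists_mem_eq_zero_of_pos_of_neg
      L₂ ⟨hp₄C, hp₄⟩ ⟨hp₃C, hp₃⟩ hq₄ hq₃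
  obtain ⟨m, ⟨hmC, hm⟩, hm'⟩ :=
    (hC.inter ((convex_singleton 0).affine_preimage L₂)).exists_mem_eq_zero_of_pos_of_neg
      L₁ ⟨hm₁C, hm₁'⟩ ⟨hm₂C, hm₂'⟩ hm₁ hm₂
  exact ⟨m, hmC, hm', hm⟩

end

def lineSide (a b : ℝ × ℝ) : (ℝ × ℝ) →ᵃ[ℝ] ℝ where
  toFun x := crossP (b - a) (x - a)
  linear :=
    { toFun := crossP (b - a)
      map_add' x y := by simp only [crossP, Prod.fst_add, Prod.snd_add]; ring
      map_smul' r x := by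
        simp only [crossP, Prod.smul_fst, Prod.smul_snd, smul_eq_mul, RingHom.id_apply]; ring }
  map_vadd' x v := by
    simp only [crossP, vadd_eq_add, Prod.fst_add, Prod.snd_add, Prod.fst_sub, Prod.snd_sub,
      LinearMap.coe_mk, AddHom.coe_mk]
    ring

theorem lineSide_apply (a b x : ℝ × ℝ) : lineSide a b x = crossP (b - a) (x - a) := rfl

theorem lineSide_eq_zero_of_mem_segment {a b x : ℝ × ℝ} (hx : x ∈ segment ℝ a b) :
    lineSide a b x = 0 := by
  obtain ⟨s, t, -, -, hst, rfl⟩ := hx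
  obtain rfl : s = 1 - t := by linarith
  simp only [lineSide_apply, crossP, Prod.fst_add, Prod.snd_add, Prod.fst_sub, Prod.snd_sub,
    Prod.smul_fst, Prod.smul_snd, smul_eq_mul]
  ring

theorem eq_of_lineSide_eq_zero {a b a' b' x y : ℝ × ℝ} (h : crossP (b - a) (b' - a') ≠ 0)
    (hx : lineSide a b x = 0) (hy : lineSide a b y = 0)
    (hx' : lineSide a' b' x = 0) (hy' : lineSide a' b' y = 0) : x = y := by
  simp only [lineSide_apply, crossP, Prod.fst_sub, Prod.snd_sub] at h hx hy hx' hy'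
  refine Prod.ext (mul_right_cancel₀ h ?_) (mul_right_cancel₀ h ?_)
  · linear_combination (b'.1 - a'.1) * (hx - hy) - (b.1 - a.1) * (hx' - hy')
  · linear_combination (b'.2 - a'.2) * (hx - hy) - (b.2 - a.2) * (hx' - hy')

theorem convex_not_in_four_regions_general (f₀ f₁ f₂ f₃ c : ℝ × ℝ)
    (hc₁ : c ∈ segment ℝ f₀ f₂) (hc₂ : c ∈ segment ℝ f₁ f₃)
    (hcross : crossP (f₂ - f₀) (f₃ - f₁) ≠ 0)
    (R1 R2 R3 R4 : Set (ℝ × ℝ))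
    (hR1 : R1 = unitDisk ∩
      {x | crossP (f₂ - f₀) (x - f₀) > 0 ∧ crossP (f₃ - f₁) (x - f₁) > 0})
    (hR2 : R2 = unitDisk ∩
      {x | crossP (f₂ - f₀) (x - f₀) > 0 ∧ crossP (f₃ - f₁) (x - f₁) < 0})
    (hR3 : R3 = unitDisk ∩
      {x | crossP (f₂ - f₀) (x - f₀) < 0 ∧ crossP (f₃ - f₁) (x - f₁) < 0})
    (hR4 : R4 = unitDisk ∩
      {x | crossP (f₂ - f₀) (x - f₀) < 0 ∧ crossP (f₃ - f₁) (x - f₁) > 0})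
    (C : Set (ℝ × ℝ)) (hC : Convex ℝ C) (hcC : c ∉ C) :
    ¬((C ∩ R1).Nonempty ∧ (C ∩ R2).Nonempty ∧
      (C ∩ R3).Nonempty ∧ (C ∩ R4).Nonempty) := by
  subst hR1 hR2 hR3 hR4
  rintro ⟨⟨p₁, hp₁C, -, hp₁⟩, ⟨p₂, hp₂C, -, hp₂⟩, ⟨p₃, hp₃C, -, hp₃⟩, ⟨p₄, hp₄C, -, hp₄⟩⟩
  obtain ⟨m, hmC, hm₁, hm₂⟩ := hC.exists_mem_eq_zero_eq_zero_of_meets_quadrants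
    (lineSide f₀ f₂) (lineSide f₁ f₃)
    ⟨p₁, hp₁C, hp₁⟩ ⟨p₂, hp₂C, hp₂⟩ ⟨p₃, hp₃C, hp₃⟩ ⟨p₄, hp₄C, hp₄⟩
  have hmc : m = c := eq_of_lineSide_eq_zero hcross
    hm₁ (lineSide_eq_zero_of_mem_segment hc₁) hm₂ (lineSide_eq_zero_of_mem_segment hc₂)
  exact hcC (hmc ▸ hmC)

/-- let `f₀, f₁, f₂, f₃` be points on the unit circle such that the
chords `[f₀,f₂]` and `[f₁,f₃]` cross at a point `c`, dividing the open unit disk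
into four open regions `R¹, R², R³, R⁴` (the four sign combinations with respect
to the two chord lines). A convex subset `C` of the open unit disk with `c ∉ C`
cannot have a point in all four regions. -/
theorem convex_not_in_four_regions (f₀ f₁ f₂ f₃ c : ℝ × ℝ)
    (hf₀ : f₀.1 ^ 2 + f₀.2 ^ 2 = 1) (hf₁ : f₁.1 ^ 2 + f₁.2 ^ 2 = 1)
    (hf₂ : f₂.1 ^ 2 + f₂.2 ^ 2 = 1) (hf₃ : f₃.1 ^ 2 + f₃.2 ^ 2 = 1)
    (hc₁ : c ∈ segment ℝ f₀ f₂) (hc₂ : c ∈ segment ℝ f₁ f₃)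
    (hcross : crossP (f₂ - f₀) (f₃ - f₁) ≠ 0)
    (R1 R2 R3 R4 : Set (ℝ × ℝ))
    (hR1 : R1 = unitDisk ∩
      {x | crossP (f₂ - f₀) (x - f₀) > 0 ∧ crossP (f₃ - f₁) (x - f₁) > 0})
    (hR2 : R2 = unitDisk ∩
      {x | crossP (f₂ - f₀) (x - f₀) > 0 ∧ crossP (f₃ - f₁) (x - f₁) < 0})
    (hR3 : R3 = unitDisk ∩
      {x | crossP (f₂ - f₀) (x - f₀) < 0 ∧ crossP (f₃ - f₁) (x - f₁) < 0})
    (hR4 : R4 = unitDisk ∩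
      {x | crossP (f₂ - f₀) (x - f₀) < 0 ∧ crossP (f₃ - f₁) (x - f₁) > 0})
    (C : Set (ℝ × ℝ)) (hC : Convex ℝ C) (hCd : C ⊆ unitDisk) (hcC : c ∉ C) :
    ¬((C ∩ R1).Nonempty ∧ (C ∩ R2).Nonempty ∧
      (C ∩ R3).Nonempty ∧ (C ∩ R4).Nonempty) :=
  convex_not_in_four_regions_general f₀ f₁ f₂ f₃ c hc₁ hc₂ hcross R1 R2 R3 R4 hR1 hR2 hR3 hR4 C hC
    hcC
end

section
/- Let L₁ and L₂ be two lines in the plane crossing at a point c, dividing the plane into four closed quadrants. Let C be a convex set not containing c. If C has points in the closures of three of the four quadrants that are pairwise non-opposite in a cyclic order (e.g., in R̄¹, R̄⁴, R̄³), then C has no point in the closure of the remaining quadrant minus the two bounding rays (i.e., C ∩ R² = ∅ for the open fourth quadrant R²). -/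
/-!
Map the plane affinely to `ℝ × ℝ` by `x ↦ (crossP u (x - c), crossP v (x - c))`, an affine
isomorphism sending `c` to `0` and the quadrants to the coordinate quadrants. A point of `C` in the
open quadrant `R²` would make the image of `C` a convex set meeting all four closed coordinate
quadrants, and such a set contains the origin: on a segment joining the third and second quadrants
it meets the non-positive horizontal half-axis, on one joining the fourth and first quadrants
the non-negative one, and the segment between these two points passes through the origin.
-/

open Set

section Segment

variable {𝕜 E : Type*} [Field 𝕜] [LinearOrder 𝕜] [IsStrictOrderedRing 𝕜]
  [AddCommGroup E] [Module 𝕜 E]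

theorem exists_mem_segment_eq_zero (f : E →ᵃ[𝕜] 𝕜) {p q : E}
    (hp : f p ≤ 0) (hq : 0 ≤ f q) :
    ∃ y ∈ segment 𝕜 p q, f y = 0 := by
  suffices (0 : 𝕜) ∈ f '' segment 𝕜 p q from this
  rw [image_segment, segment_eq_Icc (hp.trans hq)]
  exact ⟨hp, hq⟩

theorem Convex.zero_mem_of_meets_closed_quadrants {S : Set (𝕜 × 𝕜)} (hS : Convex 𝕜 S)
    {a b d x : 𝕜 × 𝕜} (ha : a ∈ S) (hb : b ∈ S) (hd : d ∈ S) (hx : x ∈ S)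
    (ha' : 0 ≤ a.1 ∧ 0 ≤ a.2) (hb' : 0 ≤ b.1 ∧ b.2 ≤ 0) (hd' : d.1 ≤ 0 ∧ d.2 ≤ 0)
    (hx' : x.1 ≤ 0 ∧ 0 ≤ x.2) :
    (0 : 𝕜 × 𝕜) ∈ S := by
  obtain ⟨r, hr, hr2 : r.2 = 0⟩ :=
    exists_mem_segment_eq_zero (AffineMap.snd : 𝕜 × 𝕜 →ᵃ[𝕜] 𝕜) hd'.2 hx'.2
  have hr1 : r.1 ≤ 0 := (convex_Iic 0).segment_subset hd'.1 hx'.1 (Prod.segment_subset d x hr).1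
  obtain ⟨q, hq, hq2 : q.2 = 0⟩ :=
    exists_mem_segment_eq_zero (AffineMap.snd : 𝕜 × 𝕜 →ᵃ[𝕜] 𝕜) hb'.2 ha'.2
  have hq1 : 0 ≤ q.1 := (convex_Ici 0).segment_subset hb'.1 ha'.1 (Prod.segment_subset b a hq).1
  obtain ⟨w, hw, hw1 : w.1 = 0⟩ :=
    exists_mem_segment_eq_zero (AffineMap.fst : 𝕜 × 𝕜 →ᵃ[𝕜] 𝕜) hr1 hq1
  have hw2 : w.2 = 0 := by
    simpa only [hr2, hq2, segment_same, mem_singleton_iff] using (Prod.segment_subset r q hw).2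
  have hw0 : w = 0 := Prod.ext hw1 hw2
  rw [← hw0]
  exact hS.segment_subset (hS.segment_subset hd hx hr) (hS.segment_subset hb ha hq) hw

end Segment

theorem closure_setOf_lt_and_lt_subset {α β : Type*} [LinearOrder α] [TopologicalSpace α]
    [OrderClosedTopology α] [TopologicalSpace β] {f g f' g' : β → α} (hf : Continuous f)
    (hg : Continuous g) (hf' : Continuous f') (hg' : Continuous g') :
    closure {x | f x < g x ∧ f' x < g' x} ⊆ {x | f x ≤ g x ∧ f' x ≤ g' x} :=
  (closure_inter_subset_inter_closure _ _).trans
    (inter_subset_inter (closure_lt_subset_le hf hg) (closure_lt_subset_le hf' hg'))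

def crossPLinear (u : ℝ × ℝ) : ℝ × ℝ →ₗ[ℝ] ℝ where
  toFun := crossP u
  map_add' x y := by simp only [crossP, Prod.fst_add, Prod.snd_add]; ring
  map_smul' t x := by
    simp only [crossP, Prod.smul_fst, Prod.smul_snd, smul_eq_mul, RingHom.id_apply]; ring

def crossCoords (u v c : ℝ × ℝ) : ℝ × ℝ →ᵃ[ℝ] ℝ × ℝ :=
  ((crossPLinear u).prod (crossPLinear v)).toAffineMap.comp
    (AffineMap.id ℝ (ℝ × ℝ) - AffineMap.const ℝ (ℝ × ℝ) c)

theorem continuous_crossP_sub (w c : ℝ × ℝ) : Continuous fun x => crossP w (x - c) := by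
  unfold crossP
  fun_prop

theorem eq_zero_of_crossP_eq_zero {u v y : ℝ × ℝ} (huv : crossP u v ≠ 0)
    (hu : crossP u y = 0) (hv : crossP v y = 0) : y = 0 := by
  unfold crossP at *
  have h1 : (u.1 * v.2 - u.2 * v.1) * y.1 = 0 := by linear_combination v.1 * hu - u.1 * hv
  have h2 : (u.1 * v.2 - u.2 * v.1) * y.2 = 0 := by linear_combination v.2 * hu - u.2 * hv
  exact Prod.ext ((mul_eq_zero.1 h1).resolve_left huv) ((mul_eq_zero.1 h2).resolve_left huv)

theorem convex_misses_fourth_quadrant_general (c u v : ℝ × ℝ)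
    (huv : crossP u v ≠ 0)
    (R1 R2 R3 R4 : Set (ℝ × ℝ))
    (hR1 : R1 = {x | crossP u (x - c) > 0 ∧ crossP v (x - c) > 0})
    (hR2 : R2 = {x | crossP u (x - c) < 0 ∧ crossP v (x - c) > 0})
    (hR3 : R3 = {x | crossP u (x - c) < 0 ∧ crossP v (x - c) < 0})
    (hR4 : R4 = {x | crossP u (x - c) > 0 ∧ crossP v (x - c) < 0})
    (C : Set (ℝ × ℝ)) (hC : Convex ℝ C) (hcC : c ∉ C)
    (h1 : (C ∩ closure R1).Nonempty) (h4 : (C ∩ closure R4).Nonempty)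
    (h3 : (C ∩ closure R3).Nonempty) :
    C ∩ R2 = ∅ := by
  subst hR1 hR2 hR3 hR4
  have hu := continuous_crossP_sub u c
  have hv := continuous_crossP_sub v c
  obtain ⟨a, haC, haR⟩ := h1
  obtain ⟨b, hbC, hbR⟩ := h4
  obtain ⟨d, hdC, hdR⟩ := h3
  refine eq_empty_iff_forall_notMem.2 fun x ⟨hxC, hxR⟩ => hcC ?_
  obtain ⟨w, hwC, hw0⟩ : (0 : ℝ × ℝ) ∈ crossCoords u v c '' C :=
    (hC.affine_image _).zero_mem_of_meets_closed_quadrants (mem_image_of_mem _ haC)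
      (mem_image_of_mem _ hbC) (mem_image_of_mem _ hdC) (mem_image_of_mem _ hxC)
      (closure_setOf_lt_and_lt_subset continuous_const hu continuous_const hv haR)
      (closure_setOf_lt_and_lt_subset continuous_const hu hv continuous_const hbR)
      (closure_setOf_lt_and_lt_subset hu continuous_const hv continuous_const hdR)
      ⟨hxR.1.le, hxR.2.le⟩
  have hwc : w - c = 0 :=
    eq_zero_of_crossP_eq_zero huv (congrArg Prod.fst hw0) (congrArg Prod.snd hw0)
  rwa [← sub_eq_zero.1 hwc]

/-- two distinct lines through `c` (with direction vectors `u, v`)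
divide the plane into four open quadrants `R¹, R², R³, R⁴` in cyclic order.
If a convex set `C` with `c ∉ C` has points in the closures of `R¹`, `R⁴` and
`R³`, then `C` has no point in the remaining open quadrant `R²`. -/
theorem convex_misses_fourth_quadrant (c u v : ℝ × ℝ)
    (hu : u ≠ 0) (hv : v ≠ 0) (huv : crossP u v ≠ 0)
    (R1 R2 R3 R4 : Set (ℝ × ℝ))
    (hR1 : R1 = {x | crossP u (x - c) > 0 ∧ crossP v (x - c) > 0})
    (hR2 : R2 = {x | crossP u (x - c) < 0 ∧ crossP v (x - c) > 0})
    (hR3 : R3 = {x | crossP u (x - c) < 0 ∧ crossP v (x - c) < 0})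
    (hR4 : R4 = {x | crossP u (x - c) > 0 ∧ crossP v (x - c) < 0})
    (C : Set (ℝ × ℝ)) (hC : Convex ℝ C) (hcC : c ∉ C)
    (h1 : (C ∩ closure R1).Nonempty) (h4 : (C ∩ closure R4).Nonempty)
    (h3 : (C ∩ closure R3).Nonempty) :
    C ∩ R2 = ∅ :=
  convex_misses_fourth_quadrant_general c u v huv R1 R2 R3 R4 hR1 hR2 hR3 hR4 C hC hcC h1 h4 h3
end

section
/- Let ℐ be a finite family of 2-intervals (each a union of one interval from each of two fixed disjoint lines) with no two disjoint members (matching number ν(ℐ) = 1). Then ℐ can be pierced by 2 points. -/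
/-!
Call a pair of members *split* if their intervals on the first line are disjoint; then their
intervals on the second line meet, so their union `J i ∪ J j` is an interval. Any two such unions
meet: otherwise each of `I i, I j` meets each of `I k, I l`, and an interval meeting both of the
disjoint `I k, I l` contains the gap between them, forcing `I i ∩ I j ≠ ∅`. By Helly's theorem on
the line some `q` lies in every such union. The members missed by `q` contain no split pair, so
their first intervals pairwise meet, and Helly again gives `p`.
-/

open Set

lemma image_inl_union_image_inr_inter_nonempty_iff {α β : Type*} {A A' : Set α} {B B' : Set β} :
    ((Sum.inl '' A ∪ Sum.inr '' B) ∩ (Sum.inl '' A' ∪ Sum.inr '' B')).Nonempty ↔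
      (A ∩ A').Nonempty ∨ (B ∩ B').Nonempty := by
  constructor
  · rintro ⟨x | y, hx, hx'⟩
    · exact .inl ⟨x, by simpa using hx, by simpa using hx'⟩
    · exact .inr ⟨y, by simpa using hx, by simpa using hx'⟩
  · rintro (⟨x, hx⟩ | ⟨y, hy⟩)
    · exact ⟨.inl x, by simpa using hx⟩
    · exact ⟨.inr y, by simpa using hy⟩

section IntervalFamilies

variable {α β ι : Type*} [LinearOrder α]

lemma Icc_inter_Icc_nonempty_iff {a₁ b₁ a₂ b₂ : α} :
    (Icc a₁ b₁ ∩ Icc a₂ b₂).Nonempty ↔ a₁ ≤ b₁ ∧ a₂ ≤ b₂ ∧ a₁ ≤ b₂ ∧ a₂ ≤ b₁ := by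
  rw [Icc_inter_Icc, nonempty_Icc]
  simp only [max_le_iff, le_min_iff]
  tauto

lemma exists_forall_mem_Icc_of_pairwise_inter_nonempty [Nonempty α] (s : Finset ι) (a b : ι → α)
    (h : ∀ i ∈ s, ∀ j ∈ s, (Icc (a i) (b i) ∩ Icc (a j) (b j)).Nonempty) :
    ∃ p, ∀ i ∈ s, p ∈ Icc (a i) (b i) := by
  rcases s.eq_empty_or_nonempty with rfl | hs
  · simp
  refine ⟨s.sup' hs a, fun i hi => ⟨s.le_sup' a hi, s.sup'_le hs a fun j hj => ?_⟩⟩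
  exact (Icc_inter_Icc_nonempty_iff.1 (h j hj i hi)).2.2.1

lemma Icc_inter_Icc_nonempty_of_meets_disjoint {a₁ b₁ a₂ b₂ a₃ b₃ a₄ b₄ : α}
    (h₁₂ : Disjoint (Icc a₁ b₁) (Icc a₂ b₂))
    (h₃₁ : (Icc a₃ b₃ ∩ Icc a₁ b₁).Nonempty) (h₃₂ : (Icc a₃ b₃ ∩ Icc a₂ b₂).Nonempty)
    (h₄₁ : (Icc a₄ b₄ ∩ Icc a₁ b₁).Nonempty) (h₄₂ : (Icc a₄ b₄ ∩ Icc a₂ b₂).Nonempty) :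
    (Icc a₃ b₃ ∩ Icc a₄ b₄).Nonempty := by
  rw [disjoint_iff_inter_eq_empty, ← not_nonempty_iff_eq_empty] at h₁₂
  simp only [Icc_inter_Icc_nonempty_iff] at *
  push Not at h₁₂
  -- both `Icc a₃ b₃` and `Icc a₄ b₄` contain `min b₁ b₂`, the left end of the gap
  refine ⟨?_, ?_, ?_, ?_⟩ <;> grind

lemma union_inter_union_nonempty_of_disjoint [Preorder β] {a b : ι → α} {c d : ι → β}
    {i j k l : ι} (hij : Disjoint (Icc (a i) (b i)) (Icc (a j) (b j)))
    (hkl : Disjoint (Icc (a k) (b k)) (Icc (a l) (b l)))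
    (h : ∀ m ∈ ({i, j} : Set ι), ∀ n ∈ ({k, l} : Set ι),
      (Icc (a m) (b m) ∩ Icc (a n) (b n)).Nonempty ∨ (Icc (c m) (d m) ∩ Icc (c n) (d n)).Nonempty) :
    ((Icc (c i) (d i) ∪ Icc (c j) (d j)) ∩ (Icc (c k) (d k) ∪ Icc (c l) (d l))).Nonempty := by
  by_contra hJ
  have meet {m n : ι} (hm : m ∈ ({i, j} : Set ι)) (hn : n ∈ ({k, l} : Set ι))
      (hmJ : Icc (c m) (d m) ⊆ Icc (c i) (d i) ∪ Icc (c j) (d j))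
      (hnJ : Icc (c n) (d n) ⊆ Icc (c k) (d k) ∪ Icc (c l) (d l)) :
      (Icc (a m) (b m) ∩ Icc (a n) (b n)).Nonempty :=
    (h m hm n hn).resolve_right fun hmn => hJ (hmn.mono (inter_subset_inter hmJ hnJ))
  refine not_disjoint_iff_nonempty_inter.2
    (Icc_inter_Icc_nonempty_of_meets_disjoint hkl ?_ ?_ ?_ ?_) hij
  · exact meet (by simp) (by simp) subset_union_left subset_union_left
  · exact meet (by simp) (by simp) subset_union_left subset_union_right
  · exact meet (by simp) (by simp) subset_union_right subset_union_left
  · exact meet (by simp) (by simp) subset_union_right subset_union_right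

theorem exists_pierce_of_pairwise_inter_nonempty [Nonempty α] [LinearOrder β] [Nonempty β]
    (s : Finset ι) (a b : ι → α) (c d : ι → β)
    (h : ∀ i ∈ s, ∀ j ∈ s,
      (Icc (a i) (b i) ∩ Icc (a j) (b j)).Nonempty ∨ (Icc (c i) (d i) ∩ Icc (c j) (d j)).Nonempty) :
    ∃ p q, ∀ i ∈ s, p ∈ Icc (a i) (b i) ∨ q ∈ Icc (c i) (d i) := by
  classical
  set D := (s ×ˢ s).filter fun e => Disjoint (Icc (a e.1) (b e.1)) (Icc (a e.2) (b e.2))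
  have mem_D {e : ι × ι} :
      e ∈ D ↔ e.1 ∈ s ∧ e.2 ∈ s ∧ Disjoint (Icc (a e.1) (b e.1)) (Icc (a e.2) (b e.2)) := by
    simp [D, and_assoc]
  have union_eq {e : ι × ι} (he : e ∈ D) : Icc (c e.1) (d e.1) ∪ Icc (c e.2) (d e.2)
      = Icc (min (c e.1) (c e.2)) (max (d e.1) (d e.2)) := by
    obtain ⟨h₁, h₂, hdisj⟩ := mem_D.1 he
    have hJ := Icc_inter_Icc_nonempty_iff.1 <|
      (h _ h₁ _ h₂).resolve_left (not_disjoint_iff_nonempty_inter.2 · hdisj)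
    exact Icc_union_Icc' hJ.2.2.2 hJ.2.2.1
  obtain ⟨q, hq⟩ : ∃ q, ∀ e ∈ D, q ∈ Icc (min (c e.1) (c e.2)) (max (d e.1) (d e.2)) := by
    refine exists_forall_mem_Icc_of_pairwise_inter_nonempty D _ _ fun e he f hf => ?_
    obtain ⟨he₁, he₂, hedisj⟩ := mem_D.1 he
    obtain ⟨hf₁, hf₂, hfdisj⟩ := mem_D.1 hf
    rw [← union_eq he, ← union_eq hf]
    refine union_inter_union_nonempty_of_disjoint hedisj hfdisj fun m hm n hn => h m ?_ n ?_
    · rcases hm with rfl | rfl <;> assumption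
    · rcases hn with rfl | rfl <;> assumption
  obtain ⟨p, hp⟩ := exists_forall_mem_Icc_of_pairwise_inter_nonempty
    (s.filter fun i => q ∉ Icc (c i) (d i)) a b fun i hi j hj => by
      rw [Finset.mem_filter] at hi hj
      by_contra hij
      have hD : (i, j) ∈ D :=
        mem_D.2 ⟨hi.1, hj.1, not_disjoint_iff_nonempty_inter.not_right.2 hij⟩
      have := hq _ hD
      rw [← union_eq hD] at this
      exact this.elim hi.2 hj.2
  refine ⟨p, q, fun i hi => ?_⟩
  by_cases hqi : q ∈ Icc (c i) (d i)
  · exact .inr hqi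
  · exact .inl (hp i (Finset.mem_filter.2 ⟨hi, hqi⟩))

end IntervalFamilies

/-- Tardos's theorem, case ν = 1: a finite family of 2-intervals
(each the union of a closed interval on each of two disjoint copies of ℝ,
modelled as `ℝ ⊕ ℝ`) in which no two members are disjoint can be pierced by
two points. -/
theorem two_intervals_nu_one_pierce_two (ℐ : Finset (Set (ℝ ⊕ ℝ)))
    (h2int : ∀ F ∈ ℐ, ∃ a b c d : ℝ,
      F = Sum.inl '' Set.Icc a b ∪ Sum.inr '' Set.Icc c d)
    (hν : ∀ F₁ ∈ ℐ, ∀ F₂ ∈ ℐ, (F₁ ∩ F₂).Nonempty) :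
    ∃ p q : ℝ ⊕ ℝ, ∀ F ∈ ℐ, p ∈ F ∨ q ∈ F := by
  choose a b c d hF using fun F : ℐ => h2int F F.2
  obtain ⟨p, q, hpq⟩ := exists_pierce_of_pairwise_inter_nonempty Finset.univ a b c d
    fun F _ G _ => by
      have := hν F F.2 G G.2
      rwa [hF F, hF G, image_inl_union_image_inr_inter_nonempty_iff] at this
  refine ⟨.inl p, .inr q, fun F hF' => ?_⟩
  rw [show F = _ from hF ⟨F, hF'⟩]
  simpa using hpq ⟨F, hF'⟩ (Finset.mem_univ _)
end

section
/- Let 𝒞₁ be a finite family of convex sets in the plane, each disjoint from a fixed region R¹, such that any two members of 𝒞₁ intersect. Let T₁ and T₂ be two curves, each homeomorphic to a closed interval of ℝ, such that for every F ∈ 𝒞₁, the sets F ∩ T₁ and F ∩ T₂ are each connected (intervals on the respective curves), and such that for every pair F₁, F₂ ∈ 𝒞₁ the intersection F₁ ∩ F₂ meets T₁ ∪ T₂. Then 𝒞₁ can be pierced by 2 points. -/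
/-!
Pulling each `F` back along the two arcs turns it into a 2-interval: a pair of intervals
`A F`, `B F` of parameters in `[0, 1]`, and any two of these 2-intervals meet. Call a pair
`(F, G)` bad if `B F` and `B G` are disjoint; then `A F ∪ A G` is an interval, and two such
unions always meet, since otherwise the four cross pairs would all meet on the second line and
force the `B`-parts of one bad pair to meet. One-dimensional Helly gives a parameter `s` in all
these unions. The members with `s ∉ A F` then have pairwise meeting `B`-parts, and Helly
again gives `t` in all of them; `γ₁ s` and `γ₂ t` pierce the family.
-/

open Set

theorem exists_mem_of_pairwise_inter_nonempty {ι : Type*} [Finite ι] {A : ι → Set ℝ}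
    (hA : ∀ i, (A i).OrdConnected) (h : ∀ i j, (A i ∩ A j).Nonempty) :
    ∃ x, ∀ i, x ∈ A i := by
  classical
  have := Fintype.ofFinite ι
  obtain ⟨x, hx⟩ := Convex.helly_theorem' (𝕜 := ℝ) (s := Finset.univ)
    (fun i _ => (hA i).convex) (fun I _ hI => by
      rw [Module.finrank_self] at hI
      interval_cases hcard : I.card
      · simp [Finset.card_eq_zero.mp hcard]
      · obtain ⟨i, rfl⟩ := Finset.card_eq_one.mp hcard
        simpa using h i i
      · obtain ⟨i, j, -, rfl⟩ := Finset.card_eq_two.mp hcard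
        simpa using h i j)
  exact ⟨x, fun i => mem_iInter₂.mp hx i (Finset.mem_univ i)⟩

section LinearOrder

variable {α : Type*} [LinearOrder α]

theorem Set.OrdConnected.lt_of_disjoint {s t : Set α} (hs : s.OrdConnected)
    (ht : t.OrdConnected)
    (hst : Disjoint s t) {x y : α} (hx : x ∈ s) (hy : y ∈ t) (hxy : x < y)
    {x' y' : α} (hx' : x' ∈ s) (hy' : y' ∈ t) : x' < y' := by
  by_contra! hyx'
  rcases le_or_gt y x' with hyx' | hx'y
  · exact hst.notMem_of_mem_right hy (hs.out hx hx' ⟨hxy.le, hyx'⟩)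
  · exact hst.notMem_of_mem_left hx' (ht.out hy' hy ⟨hyx', hx'y.le⟩)

/-- `s` lies entirely on one side of `t`, and `u`, `v` both contain the gap between them. -/
theorem Set.OrdConnected.inter_nonempty_of_meet_disjoint {s t u v : Set α}
    (hs : s.OrdConnected) (ht : t.OrdConnected) (hu : u.OrdConnected) (hv : v.OrdConnected)
    (hst : Disjoint s t) (hsu : (s ∩ u).Nonempty) (htu : (t ∩ u).Nonempty)
    (hsv : (s ∩ v).Nonempty) (htv : (t ∩ v).Nonempty) : (u ∩ v).Nonempty := by
  wlog hlt : ∃ x ∈ s ∩ u, ∃ y ∈ t ∩ u, x < y generalizing s t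
  · have ⟨x, hx⟩ := hsu
    have ⟨y, hy⟩ := htu
    refine this ht hs hst.symm htu hsu htv hsv ⟨y, hy, x, hx, ?_⟩
    exact lt_of_le_of_ne (not_lt.mp fun h => hlt ⟨x, hx, y, hy, h⟩)
      fun h => hst.notMem_of_mem_left hx.1 (h ▸ hy.1)
  obtain ⟨x, hx, y, hy, hxy⟩ := hlt
  obtain ⟨x', hx'⟩ := hsv
  obtain ⟨y', hy'⟩ := htv
  have hsep := fun {a b} (ha : a ∈ s) (hb : b ∈ t) => hs.lt_of_disjoint ht hst hx.1 hy.1 hxy ha hb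
  exact ⟨max x x', hu.out hx.2 hy.2 ⟨le_max_left _ _, max_le hxy.le (hsep hx'.1 hy.1).le⟩,
    hv.out hx'.2 hy'.2 ⟨le_max_right _ _, max_le (hsep hx.1 hy'.1).le (hsep hx'.1 hy'.1).le⟩⟩

theorem Set.OrdConnected.union_of_inter_nonempty {s t : Set α} (hs : s.OrdConnected)
    (ht : t.OrdConnected) (hst : (s ∩ t).Nonempty) : (s ∪ t).OrdConnected := by
  obtain ⟨w, hws, hwt⟩ := hst
  refine ⟨fun x hx y hy z hz => ?_⟩
  rcases le_total z w with hzw | hwz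
  · rcases hx with hx | hx
    · exact Or.inl (hs.out hx hws ⟨hz.1, hzw⟩)
    · exact Or.inr (ht.out hx hwt ⟨hz.1, hzw⟩)
  · rcases hy with hy | hy
    · exact Or.inl (hs.out hws hy ⟨hwz, hz.2⟩)
    · exact Or.inr (ht.out hwt hy ⟨hwz, hz.2⟩)

end LinearOrder

section TwoIntervals

variable {ι : Type*} {A B : ι → Set ℝ}

theorem unions_inter_nonempty_of_disjoint (hB : ∀ i, (B i).OrdConnected)
    (h : ∀ i j, (A i ∩ A j).Nonempty ∨ (B i ∩ B j).Nonempty) {i j k l : ι}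
    (hij : Disjoint (B i) (B j)) (hkl : Disjoint (B k) (B l)) :
    ((A i ∪ A j) ∩ (A k ∪ A l)).Nonempty := by
  by_contra hempty
  have hmeetB : ∀ a b, A a ⊆ A i ∪ A j → A b ⊆ A k ∪ A l → (B a ∩ B b).Nonempty :=
    fun a b ha hb => (h a b).resolve_left fun hab => hempty (hab.mono (inter_subset_inter ha hb))
  refine not_disjoint_iff_nonempty_inter.mpr ?_ hkl
  exact (hB i).inter_nonempty_of_meet_disjoint (hB j) (hB k) (hB l) hij
    (hmeetB i k subset_union_left subset_union_left)
    (hmeetB j k subset_union_right subset_union_left)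
    (hmeetB i l subset_union_left subset_union_right)
    (hmeetB j l subset_union_right subset_union_right)

theorem exists_pierce_two_intervals [Finite ι] (hA : ∀ i, (A i).OrdConnected)
    (hB : ∀ i, (B i).OrdConnected) (h : ∀ i j, (A i ∩ A j).Nonempty ∨ (B i ∩ B j).Nonempty) :
    ∃ s t, ∀ i, s ∈ A i ∨ t ∈ B i := by
  let BadPair := {p : ι × ι // Disjoint (B p.1) (B p.2)}
  have hbadA (p : BadPair) : (A p.1.1 ∩ A p.1.2).Nonempty :=
    (h _ _).resolve_right fun hne => not_disjoint_iff_nonempty_inter.mpr hne p.2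
  obtain ⟨s, hs⟩ := exists_mem_of_pairwise_inter_nonempty
    (A := fun p : BadPair => A p.1.1 ∪ A p.1.2)
    (fun p => (hA _).union_of_inter_nonempty (hA _) (hbadA p))
    (fun p q => unions_inter_nonempty_of_disjoint hB h p.2 q.2)
  obtain ⟨t, ht⟩ := exists_mem_of_pairwise_inter_nonempty (A := fun i : {i // s ∉ A i} => B i)
    (fun i => hB i) (fun i j => by
      by_contra hij
      exact (hs ⟨(i, j), disjoint_iff_inter_eq_empty.mpr (not_nonempty_iff_eq_empty.mp hij)⟩).elim
        i.2 j.2)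
  exact ⟨s, t, fun i => or_iff_not_imp_left.mpr fun hi => ht ⟨i, hi⟩⟩

end TwoIntervals

theorem IsPreconnected.inter_preimage_of_injOn {X Y : Type*} [TopologicalSpace X]
    [TopologicalSpace Y] [T2Space Y] {γ : X → Y} {K : Set X} (hK : IsCompact K)
    (hγ : ContinuousOn γ K) (hinj : InjOn γ K) {F : Set Y} (hF : IsPreconnected (F ∩ γ '' K)) :
    IsPreconnected (K ∩ γ ⁻¹' F) := by
  have : CompactSpace K := isCompact_iff_compactSpace.mp hK
  have hcont : Continuous (K.domRestrict γ) := continuousOn_iff_continuous_domRestrict.mp hγ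
  have hpre := hF.preimage_of_isClosedMap hinj.injective hcont.isClosedMap
    (by rintro _ ⟨-, x, hx, rfl⟩; exact ⟨⟨x, hx⟩, rfl⟩)
  convert hpre.image _ continuous_subtype_val.continuousOn using 1
  ext x
  simp only [mem_inter_iff, mem_preimage, mem_image, Subtype.exists, Set.domRestrict_apply,
    exists_and_right, exists_eq_right]
  grind

theorem pierce_by_two_via_curves_general (𝒞₁ : Finset (Set (ℝ × ℝ)))
    (γ₁ γ₂ : ℝ → ℝ × ℝ)
    (hγ₁ : Continuous γ₁) (hinj₁ : InjOn γ₁ (Icc 0 1))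
    (hγ₂ : Continuous γ₂) (hinj₂ : InjOn γ₂ (Icc 0 1))
    (T₁ T₂ : Set (ℝ × ℝ)) (hT₁ : T₁ = γ₁ '' Icc 0 1) (hT₂ : T₂ = γ₂ '' Icc 0 1)
    (hconn : ∀ F ∈ 𝒞₁, IsPreconnected (F ∩ T₁) ∧ IsPreconnected (F ∩ T₂))
    (hmeet : ∀ F₁ ∈ 𝒞₁, ∀ F₂ ∈ 𝒞₁, (F₁ ∩ F₂ ∩ (T₁ ∪ T₂)).Nonempty) :
    ∃ p q : ℝ × ℝ, ∀ F ∈ 𝒞₁, p ∈ F ∨ q ∈ F := by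
  subst hT₁ hT₂
  have hparam {γ : ℝ → ℝ × ℝ} (hγ : Continuous γ) (hinj : InjOn γ (Icc 0 1)) {F : Set (ℝ × ℝ)}
      (hF : IsPreconnected (F ∩ γ '' Icc 0 1)) : (Icc 0 1 ∩ γ ⁻¹' F).OrdConnected :=
    (hF.inter_preimage_of_injOn isCompact_Icc hγ.continuousOn hinj).ordConnected
  obtain ⟨s, t, hst⟩ := exists_pierce_two_intervals (ι := 𝒞₁)
    (A := fun F => Icc 0 1 ∩ γ₁ ⁻¹' F) (B := fun F => Icc 0 1 ∩ γ₂ ⁻¹' F)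
    (fun F => hparam hγ₁ hinj₁ (hconn F F.2).1) (fun F => hparam hγ₂ hinj₂ (hconn F F.2).2)
    (fun F G => by
      obtain ⟨_, ⟨hxF, hxG⟩, ⟨u, hu, rfl⟩ | ⟨u, hu, rfl⟩⟩ := hmeet F F.2 G G.2
      exacts [Or.inl ⟨u, ⟨hu, hxF⟩, hu, hxG⟩, Or.inr ⟨u, ⟨hu, hxF⟩, hu, hxG⟩])
  exact ⟨γ₁ s, γ₂ t, fun F hF => (hst ⟨F, hF⟩).imp And.right And.right⟩

/-- let `𝒞₁` be a finite family of pairwise intersecting convex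
sets in the plane, all disjoint from a region `R¹`.  Let `T₁, T₂` be two curves,
each homeomorphic to a closed interval (images of injective paths), such that
each `F ∈ 𝒞₁` intersects each curve in a connected set, and every pairwise
intersection of members meets `T₁ ∪ T₂`.  Then `𝒞₁` can be pierced by 2
points. -/
theorem pierce_by_two_via_curves (𝒞₁ : Finset (Set (ℝ × ℝ)))
    (hconv : ∀ F ∈ 𝒞₁, Convex ℝ F)
    (R1 : Set (ℝ × ℝ)) (hdisj : ∀ F ∈ 𝒞₁, F ∩ R1 = ∅)
    (hpair : ∀ F₁ ∈ 𝒞₁, ∀ F₂ ∈ 𝒞₁, F₁ ≠ F₂ → (F₁ ∩ F₂).Nonempty)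
    (γ₁ γ₂ : ℝ → ℝ × ℝ)
    (hγ₁ : Continuous γ₁) (hinj₁ : InjOn γ₁ (Icc 0 1))
    (hγ₂ : Continuous γ₂) (hinj₂ : InjOn γ₂ (Icc 0 1))
    (T₁ T₂ : Set (ℝ × ℝ)) (hT₁ : T₁ = γ₁ '' Icc 0 1) (hT₂ : T₂ = γ₂ '' Icc 0 1)
    (hconn : ∀ F ∈ 𝒞₁, IsPreconnected (F ∩ T₁) ∧ IsPreconnected (F ∩ T₂))
    (hmeet : ∀ F₁ ∈ 𝒞₁, ∀ F₂ ∈ 𝒞₁, (F₁ ∩ F₂ ∩ (T₁ ∪ T₂)).Nonempty) :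
    ∃ p q : ℝ × ℝ, ∀ F ∈ 𝒞₁, p ∈ F ∨ q ∈ F :=
  pierce_by_two_via_curves_general 𝒞₁ γ₁ γ₂ hγ₁ hinj₁ hγ₂ hinj₂ T₁ T₂ hT₁ hT₂ hconn hmeet
end
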